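/- Let (H, ·, 1, Δ, ε, ⊲) be a left Post-Hopf algebra over a field K of characteristic zero, and suppose that either Δ is cocommutative or H is connected as a coalgebra. Then (H, ·ᵒᵖ, 1, Δᶜᵒᵖ, ε, ⊲ᵒᵖ) is a right Post-Hopf algebra, where x ·ᵒᵖ y = y·x, Δᶜᵒᵖ = τ ∘ Δ (τ the flip of the tensor factors) and x ⊲ᵒᵖ y = y ⊲ x. -/

import Mathlib

open TensorProduct

/-- The raw data of a bialgebra structure on a `K`-vector space `H`: a (bilinear)
multiplication, a unit, a comultiplication and a counit. -/
structure BialgData (K H : Type*) [Field K] [AddCommGroup H] [Module K H] where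
  mul : H →ₗ[K] H →ₗ[K] H
  one : H
  comul : H →ₗ[K] H ⊗[K] H
  counit : H →ₗ[K] K

namespace BialgData

variable {K H : Type*} [Field K] [AddCommGroup H] [Module K H]

/-- `D` is a bialgebra. -/
structure IsBialgebra (D : BialgData K H) : Prop where
  mul_assoc : ∀ x y z : H, D.mul (D.mul x y) z = D.mul x (D.mul y z)
  one_mul : ∀ x : H, D.mul D.one x = x
  mul_one : ∀ x : H, D.mul x D.one = x
  coassoc : ∀ x : H,
    (TensorProduct.assoc K H H H) ((TensorProduct.map D.comul LinearMap.id) (D.comul x))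
      = (TensorProduct.map LinearMap.id D.comul) (D.comul x)
  counit_comul : ∀ x : H,
    (TensorProduct.lid K H) ((TensorProduct.map D.counit LinearMap.id) (D.comul x)) = x
  comul_counit : ∀ x : H,
    (TensorProduct.rid K H) ((TensorProduct.map LinearMap.id D.counit) (D.comul x)) = x
  comul_mul : ∀ x y : H,
    D.comul (D.mul x y) = TensorProduct.map₂ D.mul D.mul (D.comul x) (D.comul y)
  counit_mul : ∀ x y : H, D.counit (D.mul x y) = D.counit x * D.counit y
  comul_one : D.comul D.one = D.one ⊗ₜ[K] D.one
  counit_one : D.counit D.one = 1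

/-- `D` is a Hopf algebra: a bialgebra admitting an antipode. -/
structure IsHopf (D : BialgData K H) : Prop where
  isBialgebra : D.IsBialgebra
  antipode : ∃ S : H →ₗ[K] H,
    (∀ x : H, TensorProduct.lift (D.mul.compl₁₂ S LinearMap.id) (D.comul x)
        = D.counit x • D.one)
    ∧ (∀ x : H, TensorProduct.lift (D.mul.compl₁₂ LinearMap.id S) (D.comul x)
        = D.counit x • D.one)

/-- The opposite-multiplication bialgebra data. -/
def op (D : BialgData K H) : BialgData K H := { D with mul := D.mul.flip }

/-- The coopposite-comultiplication bialgebra data. -/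
noncomputable def cop (D : BialgData K H) : BialgData K H :=
  { D with comul := (TensorProduct.comm K H H).toLinearMap ∘ₗ D.comul }

/-- `(D, r)` is a right Post-Hopf algebra, with `r x y = x ⊳ y`. -/
structure IsRightPostHopf (D : BialgData K H) (r : H →ₗ[K] H →ₗ[K] H) : Prop where
  isHopf : D.IsHopf
  counit_r : ∀ x y : H, D.counit (r x y) = D.counit x * D.counit y
  comul_r : ∀ x y : H,
    D.comul (r x y) = TensorProduct.map₂ r r (D.comul x) (D.comul y)
  mul_r : ∀ x y z : H,
    r (D.mul x y) z = TensorProduct.lift (D.mul.compl₁₂ (r x) (r y)) (D.comul z)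
  r_r : ∀ x y z : H,
    r (r x y) z
      = r x (TensorProduct.lift (D.mul.compl₁₂ (r y) LinearMap.id) (D.comul z))
  conv_inv : ∃ β : H →ₗ[K] H →ₗ[K] H, ∀ x : H,
    TensorProduct.lift ((LinearMap.llcomp K H H H).compl₁₂ r.flip β) (D.comul x)
        = D.counit x • (LinearMap.id : H →ₗ[K] H)
    ∧ TensorProduct.lift ((LinearMap.llcomp K H H H).compl₁₂ β r.flip) (D.comul x)
        = D.counit x • (LinearMap.id : H →ₗ[K] H)

/-- `(D, l)` is a left Post-Hopf algebra, with `l x y = x ⊲ y`. -/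
structure IsLeftPostHopf (D : BialgData K H) (l : H →ₗ[K] H →ₗ[K] H) : Prop where
  isHopf : D.IsHopf
  counit_l : ∀ x y : H, D.counit (l x y) = D.counit x * D.counit y
  comul_l : ∀ x y : H,
    D.comul (l x y) = TensorProduct.map₂ l l (D.comul x) (D.comul y)
  l_mul : ∀ x y z : H,
    l x (D.mul y z)
      = TensorProduct.lift (D.mul.compl₁₂ (l.flip y) (l.flip z)) (D.comul x)
  l_l : ∀ x y z : H,
    l x (l y z)
      = TensorProduct.lift
          ((D.mul.compl₁₂ LinearMap.id (l.flip y)).compr₂ (l.flip z)) (D.comul x)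
  conv_inv : ∃ β : H →ₗ[K] H →ₗ[K] H, ∀ x : H,
    TensorProduct.lift ((LinearMap.llcomp K H H H).compl₁₂ l β) (D.comul x)
        = D.counit x • (LinearMap.id : H →ₗ[K] H)
    ∧ TensorProduct.lift ((LinearMap.llcomp K H H H).compl₁₂ β l) (D.comul x)
        = D.counit x • (LinearMap.id : H →ₗ[K] H)

/-- `D` is cocommutative. -/
def IsCocomm (D : BialgData K H) : Prop :=
  ∀ x : H, TensorProduct.comm K H H (D.comul x) = D.comul x

end BialgData

universe u v

/-- A bundled `K`-module, used to form iterated tensor powers. -/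
structure ModPack (K : Type u) [CommSemiring K] : Type (max u (v + 1)) where
  carrier : Type v
  [acg : AddCommGroup carrier]
  [mod : Module K carrier]

attribute [instance] ModPack.acg ModPack.mod

/-- `tpk K H n` is the `(n+1)`-fold tensor power `H ⊗ (H ⊗ (⋯ ⊗ H))`. -/
noncomputable def tpk (K : Type u) [CommSemiring K]
    (H : Type v) [AddCommGroup H] [Module K H] : ℕ → ModPack.{u, v} K
  | 0 => ⟨H⟩
  | n + 1 => ⟨H ⊗[K] (tpk K H n).carrier⟩

namespace BialgData

variable {K : Type u} [Field K] {H : Type v} [AddCommGroup H] [Module K H]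

/-- The reduced coproduct of `D`: the unique linear map with `Δ̃(1) = 0` and
`Δ̃(x) = Δ(x) - 1 ⊗ x - x ⊗ 1` for `x ∈ ker ε`. -/
noncomputable def redComul (D : BialgData K H) : H →ₗ[K] H ⊗[K] H :=
  D.comul - TensorProduct.mk K H H D.one - (TensorProduct.mk K H H).flip D.one
    + D.counit.smulRight (D.one ⊗ₜ[K] D.one)

/-- Applying `Δ̃` to the first tensor factor: `Δ̃ ⊗ id^{⊗ n}`. -/
noncomputable def frontMap (D : BialgData K H) :
    (n : ℕ) → (tpk K H n).carrier →ₗ[K] (tpk K H (n + 1)).carrier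
  | 0 => D.redComul
  | n + 1 =>
      (TensorProduct.assoc K H H (tpk K H n).carrier).toLinearMap
        ∘ₗ TensorProduct.map D.redComul LinearMap.id

/-- The iterated reduced coproducts: `Δ̃⁽⁰⁾ = ρ` (with `ρ(x) = x - ε(x)1`), `Δ̃⁽¹⁾ = Δ̃`,
and `Δ̃⁽ᵏ⁺¹⁾ = (Δ̃ ⊗ id^{⊗ k}) ∘ Δ̃⁽ᵏ⁾`. -/
noncomputable def redIter (D : BialgData K H) :
    (n : ℕ) → H →ₗ[K] (tpk K H n).carrier
  | 0 => LinearMap.id - D.counit.smulRight D.one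
  | 1 => D.redComul
  | n + 2 => D.frontMap (n + 1) ∘ₗ D.redIter (n + 1)

/-- `D` is connected as a coalgebra: every element is killed by some iterated
reduced coproduct. -/
def IsConnected (D : BialgData K H) : Prop := ∀ x : H, ∃ n : ℕ, D.redIter n x = 0

end BialgData


/-!
If `α(x) = x ⊲ ·` is the left multiplication of `⊲`, then the right multiplication of `⊲ᵒᵖ` is
again `α`, and reversing both the product and the coproduct turns every left Post-Hopf axiom for
`⊲` into the corresponding right axiom for `⊲ᵒᵖ`; the antipode `S` serves unchanged. What is not
formal is the convolution invertibility of `α` for `Δᶜᵒᵖ`, i.e. of `op ∘ α` in the convolution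
algebra of `Δ` with values in `End(H)ᵐᵒᵖ`. For cocommutative `Δ` this is the given inverse. For
connected `H`, every linear `f : H → A` with `f 1` invertible is convolution invertible: after
normalising to `f 1 = 1`, `u = ε - f` satisfies `u^{*(n+1)} = μ ∘ u^{⊗(n+1)} ∘ Δ̃⁽ⁿ⁾`, so `u` is
locally nilpotent and `∑ uⁿ`, which stabilises pointwise, is an inverse of `f = ε - u`.
-/

open WithConv

namespace TensorProduct

section Bilinear

variable {R M N P M' N' P' : Type*} [CommSemiring R]
  [AddCommMonoid M] [Module R M] [AddCommMonoid N] [Module R N] [AddCommMonoid P] [Module R P]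
  [AddCommMonoid M'] [Module R M'] [AddCommMonoid N'] [Module R N']
  [AddCommMonoid P'] [Module R P']

theorem lift_comm_apply (f : M →ₗ[R] N →ₗ[R] P) (t : N ⊗[R] M) :
    lift f (TensorProduct.comm R N M t) = lift f.flip t :=
  LinearMap.congr_fun (lift_comp_comm_eq (f := f)) t

theorem map₂_flip (f : M →ₗ[R] N →ₗ[R] P) (g : M' →ₗ[R] N' →ₗ[R] P') :
    map₂ f.flip g.flip = (map₂ f g).flip := by
  ext; rfl

theorem comm_map₂ (f : M →ₗ[R] N →ₗ[R] P) (g : M' →ₗ[R] N' →ₗ[R] P') (s : M ⊗[R] M')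
    (t : N ⊗[R] N') :
    TensorProduct.comm R P P' (map₂ f g s t)
      = map₂ g f (TensorProduct.comm R M M' s) (TensorProduct.comm R N N' t) := by
  induction s using TensorProduct.induction_on with
  | zero => simp
  | add s s' hs hs' => simp only [map_add, LinearMap.add_apply, hs, hs']
  | tmul m m' =>
    induction t using TensorProduct.induction_on with
    | zero => simp
    | add t t' ht ht' => simp only [map_add, ht, ht']
    | tmul n n' => rfl

end Bilinear

theorem map_eq_zero_of_lTensor_eq_zero {K M V W U P : Type*} [Field K]
    [AddCommGroup M] [Module K M] [AddCommGroup V] [Module K V] [AddCommGroup W] [Module K W]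
    [AddCommGroup U] [Module K U] [AddCommGroup P] [Module K P]
    (f : M →ₗ[K] P) {φ : V →ₗ[K] W} {ψ : V →ₗ[K] U} (hker : LinearMap.ker φ ≤ LinearMap.ker ψ)
    {t : M ⊗[K] V} (ht : φ.lTensor M t = 0) : map f ψ t = 0 := by
  obtain ⟨σ, hσ⟩ := (LinearMap.ker φ).liftQ φ le_rfl |>.exists_leftInverse_of_injective
    (Submodule.ker_liftQ_eq_bot _ _ _ le_rfl)
  have hψ : ψ = ((LinearMap.ker φ).liftQ ψ hker ∘ₗ σ) ∘ₗ φ := by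
    ext v
    have hv : σ (φ v) = (LinearMap.ker φ).mkQ v := by
      simpa using LinearMap.congr_fun hσ ((LinearMap.ker φ).mkQ v)
    simp [hv]
  rw [hψ, ← LinearMap.comp_id f, map_comp, LinearMap.comp_apply]
  exact (congrArg _ ht).trans (map_zero _)

end TensorProduct

namespace LinearMap

variable {R M N : Type*} [Semiring R] [AddCommMonoid M] [Module R M] [AddCommMonoid N]
  [Module R N]

noncomputable def stableLimit (g : ℕ → M →ₗ[R] N) (hg : ∀ x, ∃ n, ∀ m ≥ n, g m x = g n x) :
    M →ₗ[R] N where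
  toFun x := g (hg x).choose x
  map_add' x y := by
    let n := max (hg (x + y)).choose (max (hg x).choose (hg y).choose)
    rw [← (hg (x + y)).choose_spec n (le_max_left _ _),
      ← (hg x).choose_spec n (le_max_of_le_right (le_max_left _ _)),
      ← (hg y).choose_spec n (le_max_of_le_right (le_max_right _ _)), map_add]
  map_smul' c x := by
    let n := max (hg (c • x)).choose (hg x).choose
    rw [← (hg (c • x)).choose_spec n (le_max_left _ _), ← (hg x).choose_spec n (le_max_right _ _),
      map_smul, RingHom.id_apply]

theorem stableLimit_apply {g : ℕ → M →ₗ[R] N} (hg : ∀ x, ∃ n, ∀ m ≥ n, g m x = g n x) {x : M}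
    {n : ℕ} (hn : ∀ m ≥ n, g m x = g n x) : stableLimit g hg x = g n x := by
  let n' := max (hg x).choose n
  exact ((hg x).choose_spec n' (le_max_left _ _)).symm.trans (hn n' (le_max_right _ _))

end LinearMap

noncomputable def mulTensorPow {K : Type u} [Field K] {H : Type v} [AddCommGroup H] [Module K H]
    {A : Type*} [Ring A] [Algebra K A] (f : H →ₗ[K] A) : (n : ℕ) → (tpk K H n).carrier →ₗ[K] A
  | 0 => f
  | n + 1 => LinearMap.mul' K A ∘ₗ map f (mulTensorPow f n)

namespace BialgData

variable {K : Type u} [Field K] {H : Type v} [AddCommGroup H] [Module K H] {D : BialgData K H}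
  {A : Type*} [Ring A] [Algebra K A]

abbrev toCoalgebraStruct (D : BialgData K H) : CoalgebraStruct K H where
  comul := D.comul
  counit := D.counit

abbrev toCoalgebra (D : BialgData K H) (hB : D.IsBialgebra) : Coalgebra K H where
  __ := D.toCoalgebraStruct
  coassoc := LinearMap.ext hB.coassoc
  rTensor_counit_comp_comul := LinearMap.ext fun x =>
    (TensorProduct.lid K H).injective ((hB.counit_comul x).trans (by simp))
  lTensor_counit_comp_comul := LinearMap.ext fun x =>
    (TensorProduct.rid K H).injective ((hB.comul_counit x).trans (by simp))

theorem IsBialgebra.op (hB : D.IsBialgebra) : D.op.IsBialgebra where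
  __ := hB
  mul_assoc x y z := (hB.mul_assoc z y x).symm
  one_mul := hB.mul_one
  mul_one := hB.one_mul
  comul_mul x y := by
    simp only [BialgData.op, LinearMap.flip_apply, hB.comul_mul, TensorProduct.map₂_flip]
  counit_mul x y := (hB.counit_mul y x).trans (mul_comm _ _)

theorem IsBialgebra.cop (hB : D.IsBialgebra) : D.cop.IsBialgebra where
  __ := hB
  coassoc x := by
    have hperm : (TensorProduct.assoc K H H H).toLinearMap ∘ₗ
          (TensorProduct.comm K H (H ⊗[K] H)).toLinearMap ∘ₗ
          map LinearMap.id (TensorProduct.comm K H H).toLinearMap ∘ₗ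
          (TensorProduct.assoc K H H H).toLinearMap =
        (TensorProduct.comm K (H ⊗[K] H) H).toLinearMap ∘ₗ
          map (TensorProduct.comm K H H).toLinearMap LinearMap.id :=
      TensorProduct.ext_threefold fun _ _ _ => rfl
    simpa [BialgData.cop, hB.coassoc, TensorProduct.map_map, map_comm] using
      LinearMap.congr_fun hperm (map D.comul LinearMap.id (D.comul x))
  counit_comul x := by
    simpa [BialgData.cop, map_comm] using hB.comul_counit x
  comul_counit x := by
    simpa [BialgData.cop, map_comm] using hB.counit_comul x
  comul_mul x y := by
    simp only [BialgData.cop, LinearMap.comp_apply, LinearEquiv.coe_coe, hB.comul_mul]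
    exact TensorProduct.comm_map₂ _ _ _ _
  comul_one := by simp [BialgData.cop, hB.comul_one]

theorem IsHopf.op_cop (hD : D.IsHopf) : D.op.cop.IsHopf := by
  obtain ⟨S, hS_left, hS_right⟩ := hD.antipode
  exact ⟨hD.isBialgebra.op.cop, S, fun x => (lift_comm_apply _ _).trans (hS_right x),
    fun x => (lift_comm_apply _ _).trans (hS_left x)⟩

noncomputable def kerCounitProj (D : BialgData K H) : H →ₗ[K] H :=
  LinearMap.id - D.counit.smulRight D.one

theorem kerCounitProj_apply (x : H) : D.kerCounitProj x = x - D.counit x • D.one := rfl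

theorem IsBialgebra.kerCounitProj_one (hB : D.IsBialgebra) : D.kerCounitProj D.one = 0 := by
  rw [kerCounitProj_apply, hB.counit_one, one_smul, sub_self]

theorem comp_kerCounitProj {M : Type*} [AddCommGroup M] [Module K M] {f : H →ₗ[K] M}
    (hf : f D.one = 0) : f ∘ₗ D.kerCounitProj = f := by
  ext x
  simp [kerCounitProj_apply, hf]

theorem IsBialgebra.map_kerCounitProj_comul {M : Type*} [AddCommGroup M] [Module K M]
    (hB : D.IsBialgebra) (f : H →ₗ[K] M) (x : H) :
    map D.kerCounitProj f (D.comul x) = map LinearMap.id f (D.comul x) - D.one ⊗ₜ f x := by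
  have hsplit : map D.kerCounitProj f
      = map LinearMap.id f - TensorProduct.mk K H M D.one ∘ₗ f ∘ₗ
          (TensorProduct.lid K H).toLinearMap ∘ₗ map D.counit LinearMap.id := by
    ext a b
    simp [kerCounitProj_apply, sub_tmul, smul_tmul]
  rw [hsplit]
  simp [hB.counit_comul]

theorem IsBialgebra.map_comul_kerCounitProj {M : Type*} [AddCommGroup M] [Module K M]
    (hB : D.IsBialgebra) (f : H →ₗ[K] M) (x : H) :
    map f D.kerCounitProj (D.comul x) = map f LinearMap.id (D.comul x) - f x ⊗ₜ D.one := by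
  have hsplit : map f D.kerCounitProj
      = map f LinearMap.id - (TensorProduct.mk K M H).flip D.one ∘ₗ f ∘ₗ
          (TensorProduct.rid K H).toLinearMap ∘ₗ map LinearMap.id D.counit := by
    ext a b
    simp [kerCounitProj_apply, tmul_sub, tmul_smul]
  rw [hsplit]
  simp [hB.comul_counit]

theorem IsBialgebra.redComul_eq (hB : D.IsBialgebra) :
    D.redComul = map D.kerCounitProj D.kerCounitProj ∘ₗ D.comul := by
  ext x
  rw [LinearMap.comp_apply, hB.map_kerCounitProj_comul, hB.map_comul_kerCounitProj, map_id]
  simp only [redComul, kerCounitProj_apply, tmul_sub, tmul_smul, LinearMap.add_apply,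
    LinearMap.sub_apply, mk_apply, LinearMap.flip_apply, LinearMap.coe_smulRight,
    LinearMap.id_coe, id_eq]
  abel

theorem IsBialgebra.redComul_one (hB : D.IsBialgebra) : D.redComul D.one = 0 := by
  simp [hB.redComul_eq, hB.comul_one, hB.kerCounitProj_one]

theorem IsBialgebra.redIter_succ (hB : D.IsBialgebra) (n : ℕ) :
    D.redIter (n + 1) = D.frontMap n ∘ₗ D.redIter n := by
  cases n with
  | zero => exact (comp_kerCounitProj hB.redComul_one).symm
  | succ n => rfl

theorem IsBialgebra.redIter_succ_apply (hB : D.IsBialgebra) (n : ℕ) (x : H) :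
    D.redIter (n + 1) x = map D.kerCounitProj (D.redIter n) (D.comul x) := by
  induction n generalizing x with
  | zero => exact LinearMap.congr_fun hB.redComul_eq x
  | succ n ih =>
    change TensorProduct.assoc K H H _ (map D.redComul LinearMap.id (D.redIter (n + 1) x))
      = map D.kerCounitProj (D.redIter (n + 1)) (D.comul x)
    rw [show D.redIter (n + 1) = map D.kerCounitProj (D.redIter n) ∘ₗ D.comul from
      LinearMap.ext ih]
    change TensorProduct.assoc K H H _
        (map D.redComul LinearMap.id (map D.kerCounitProj (D.redIter n) (D.comul x)))
      = map D.kerCounitProj (map D.kerCounitProj (D.redIter n) ∘ₗ D.comul) (D.comul x)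
    rw [map_map, comp_kerCounitProj hB.redComul_one, hB.redComul_eq,
      LinearMap.id_comp, ← LinearMap.comp_id (D.redIter n), ← map_map, ← map_map_assoc,
      hB.coassoc, map_map, LinearMap.comp_id, LinearMap.comp_id]

theorem IsBialgebra.redIter_one (hB : D.IsBialgebra) (n : ℕ) : D.redIter n D.one = 0 := by
  induction n with
  | zero => exact hB.kerCounitProj_one
  | succ n ih => rw [hB.redIter_succ, LinearMap.comp_apply, ih, map_zero]

theorem IsBialgebra.redIter_eq_zero_of_le (hB : D.IsBialgebra) {x : H} {m n : ℕ} (hmn : m ≤ n)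
    (hx : D.redIter m x = 0) : D.redIter n x = 0 := by
  induction n, hmn using Nat.le_induction with
  | base => exact hx
  | succ n _ ih => rw [hB.redIter_succ, LinearMap.comp_apply, ih, map_zero]

theorem IsBialgebra.lTensor_redIter_comul_eq_zero (hB : D.IsBialgebra) {n : ℕ} {x : H}
    (hx : D.redIter n x = 0) : (D.redIter n).lTensor H (D.comul x) = 0 := by
  have h := hB.redIter_succ_apply n x
  rw [hB.redIter_eq_zero_of_le n.le_succ hx, hB.map_kerCounitProj_comul, hx, tmul_zero,
    sub_zero] at h
  exact h.symm

theorem IsBialgebra.convPow_succ_apply (hB : D.IsBialgebra) {u : WithConv (H →ₗ[K] A)}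
    (hu : u D.one = 0) (n : ℕ) (x : H) :
    letI := D.toCoalgebra hB
    (u ^ (n + 1)) x = mulTensorPow u.ofConv n (D.redIter n x) := by
  let := D.toCoalgebra hB
  have hu_proj : u.ofConv ∘ₗ D.kerCounitProj = u.ofConv := comp_kerCounitProj hu
  induction n generalizing x with
  | zero =>
    rw [zero_add, pow_one]
    exact (LinearMap.congr_fun hu_proj x).symm
  | succ n ih =>
    have ih' : (u ^ (n + 1)).ofConv = mulTensorPow u.ofConv n ∘ₗ D.redIter n := LinearMap.ext ih
    have hsplit : map u.ofConv (mulTensorPow u.ofConv n ∘ₗ D.redIter n)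
        = map u.ofConv (mulTensorPow u.ofConv n) ∘ₗ map D.kerCounitProj (D.redIter n) := by
      rw [← map_comp, hu_proj]
    rw [pow_succ', LinearMap.convMul_apply, ih', hsplit]
    exact congrArg (LinearMap.mul' K A ∘ₗ map u.ofConv (mulTensorPow u.ofConv n))
      (hB.redIter_succ_apply n x).symm

theorem IsBialgebra.convPow_apply_eq_zero (hB : D.IsBialgebra) {u : WithConv (H →ₗ[K] A)}
    (hu : u D.one = 0) {n m : ℕ} (hnm : n < m) {x : H} (hx : D.redIter n x = 0) :
    letI := D.toCoalgebra hB
    (u ^ m) x = 0 := by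
  obtain ⟨k, rfl⟩ := Nat.exists_eq_add_of_lt hnm
  rw [hB.convPow_succ_apply hu, hB.redIter_eq_zero_of_le (Nat.le_add_right n k) hx, map_zero]

theorem IsBialgebra.exists_convMul_eq_one (hB : D.IsBialgebra) (hc : D.IsConnected)
    {f : H →ₗ[K] A} (hf : f D.one = 1) :
    letI := D.toCoalgebra hB
    ∃ g : WithConv (H →ₗ[K] A), toConv f * g = 1 ∧ g D.one = 1 := by
  let := D.toCoalgebra hB
  set u : WithConv (H →ₗ[K] A) := 1 - toConv f with hu_def
  have hu : u D.one = 0 := by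
    change algebraMap K A (D.counit D.one) - f D.one = 0
    rw [hB.counit_one, hf, map_one, sub_self]
  let s : ℕ → WithConv (H →ₗ[K] A) := fun M => ∑ i ∈ Finset.range M, u ^ i
  have hs : ∀ {n x}, D.redIter n x = 0 → ∀ M ≥ n + 1, s M x = s (n + 1) x := by
    intro n x hx M hM
    induction M, hM using Nat.le_induction with
    | base => rfl
    | succ M hM ih =>
      simp only [s, Finset.sum_range_succ] at ih ⊢
      rw [ofConv_add, LinearMap.add_apply, ih, hB.convPow_apply_eq_zero hu hM hx, add_zero]
  let g : WithConv (H →ₗ[K] A) := toConv (LinearMap.stableLimit (fun M => (s M).ofConv)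
    fun x => (hc x).elim fun n hn => ⟨n + 1, hs hn⟩)
  have hg : ∀ {n x}, D.redIter n x = 0 → g x = s (n + 1) x := fun hx =>
    LinearMap.stableLimit_apply _ (hs hx)
  refine ⟨g, ?_, ?_⟩
  · ext x
    obtain ⟨n, hn⟩ := hc x
    -- `g - s (n + 1)` vanishes on `ker Δ̃⁽ⁿ⁾`, which contains the right legs of `Δ x`.
    have htail : (toConv f * (g - s (n + 1))) x = 0 := by
      have hker : LinearMap.ker (D.redIter n) ≤ LinearMap.ker (g - s (n + 1)).ofConv :=
        fun y hy => by simp [hg (LinearMap.mem_ker.mp hy)]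
      exact (congrArg _ (map_eq_zero_of_lTensor_eq_zero f hker
        (hB.lTensor_redIter_comul_eq_zero hn))).trans (map_zero _)
    have hf_eq : toConv f = 1 - u := by rw [hu_def, sub_sub_cancel]
    calc (toConv f * g) x = (toConv f * s (n + 1)) x + (toConv f * (g - s (n + 1))) x := by
          rw [← LinearMap.add_apply, ← ofConv_add, ← mul_add, add_sub_cancel]
      _ = (1 - u ^ (n + 1)) x := by rw [htail, add_zero, hf_eq, mul_neg_geom_sum]
      _ = (1 : WithConv (H →ₗ[K] A)) x := by
          rw [ofConv_sub, LinearMap.sub_apply, hB.convPow_apply_eq_zero hu n.lt_succ_self hn,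
            sub_zero]
  · rw [hg (hB.redIter_one 0)]
    simp only [s, zero_add, Finset.sum_range_one, pow_zero]
    change algebraMap K A (D.counit D.one) = 1
    rw [hB.counit_one, map_one]

theorem IsBialgebra.isUnit_toConv_of_apply_one_eq_one (hB : D.IsBialgebra) (hc : D.IsConnected)
    {f : H →ₗ[K] A} (hf : f D.one = 1) :
    letI := D.toCoalgebra hB
    IsUnit (toConv f) := by
  let := D.toCoalgebra hB
  obtain ⟨g, hfg, hg⟩ := hB.exists_convMul_eq_one hc hf
  obtain ⟨g', hgg', -⟩ := hB.exists_convMul_eq_one hc hg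
  have hfg' : toConv f = g' := by
    rw [← _root_.mul_one (toConv f), ← hgg', toConv_ofConv, ← _root_.mul_assoc, hfg,
      _root_.one_mul]
  exact ⟨⟨toConv f, g, hfg, hfg' ▸ hgg'⟩, rfl⟩

theorem IsBialgebra.toConv_mul_counit_smulRight (hB : D.IsBialgebra) (f : H →ₗ[K] A) (a : A) :
    letI := D.toCoalgebra hB
    toConv f * toConv (D.counit.smulRight a) = toConv (LinearMap.mulRight K a ∘ₗ f) := by
  let := D.toCoalgebra hB
  have hfactor : LinearMap.mul' K A ∘ₗ map f (D.counit.smulRight a)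
      = LinearMap.mulRight K a ∘ₗ f ∘ₗ (TensorProduct.rid K H).toLinearMap
          ∘ₗ map LinearMap.id D.counit := by
    ext b c
    simp
  ext x
  exact (LinearMap.congr_fun hfactor (D.comul x)).trans (by simp [hB.comul_counit])

theorem IsBialgebra.isUnit_toConv_of_isConnected (hB : D.IsBialgebra) (hc : D.IsConnected)
    {f : H →ₗ[K] A} (hf : IsUnit (f D.one)) :
    letI := D.toCoalgebra hB
    IsUnit (toConv f) := by
  let := D.toCoalgebra hB
  -- `a ↦ ε(·) a` is multiplicative, so it moves the unit `f 1` to `1`.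
  let e : A → WithConv (H →ₗ[K] A) := fun a => toConv (D.counit.smulRight a)
  have he_mul : ∀ a b, e a * e b = e (a * b) := fun a b => by
    rw [hB.toConv_mul_counit_smulRight]
    ext x
    simp [e]
  have he_one : e 1 = 1 := by
    ext x
    exact (Algebra.algebraMap_eq_smul_one _).symm
  obtain ⟨c, hcf⟩ := hf
  have hfc : IsUnit (toConv f * e ↑c⁻¹) := by
    rw [hB.toConv_mul_counit_smulRight]
    exact hB.isUnit_toConv_of_apply_one_eq_one hc (by simp [← hcf])
  have hec : IsUnit (e c) :=
    ⟨⟨e c, e ↑c⁻¹, by rw [he_mul, Units.mul_inv, he_one], by rw [he_mul, Units.inv_mul, he_one]⟩,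
      rfl⟩
  have hf_eq : toConv f = toConv f * e ↑c⁻¹ * e c := by
    rw [_root_.mul_assoc, he_mul, Units.inv_mul, he_one, _root_.mul_one]
  exact hf_eq ▸ hfc.mul hec

/-- Convolution for `Δ` into `End(H)ᵐᵒᵖ` is convolution for `Δᶜᵒᵖ` into `End(H)`. -/
theorem unop_convMul_apply (D : BialgData K H) (f g : H →ₗ[K] Module.End K H) (x : H) :
    letI := D.toCoalgebraStruct
    MulOpposite.unop ((toConv ((MulOpposite.opLinearEquiv K).toLinearMap ∘ₗ f) *
        toConv ((MulOpposite.opLinearEquiv K).toLinearMap ∘ₗ g)) x)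
      = lift ((LinearMap.llcomp K H H H).compl₁₂ g f) (TensorProduct.comm K H H (D.comul x)) := by
  let := D.toCoalgebraStruct
  rw [LinearMap.convMul_apply]
  induction (D.comul x) using TensorProduct.induction_on with
  | zero => simp
  | tmul a b => rfl
  | add s t hs ht => simp only [map_add, MulOpposite.unop_add, hs, ht]

theorem IsLeftPostHopf.exists_convInv_cop {l : H →ₗ[K] H →ₗ[K] H} (hl : D.IsLeftPostHopf l)
    (h : D.IsCocomm ∨ D.IsConnected) :
    ∃ β : H →ₗ[K] H →ₗ[K] H, ∀ x : H,
      lift ((LinearMap.llcomp K H H H).compl₁₂ l β) (TensorProduct.comm K H H (D.comul x))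
          = D.counit x • LinearMap.id
      ∧ lift ((LinearMap.llcomp K H H H).compl₁₂ β l) (TensorProduct.comm K H H (D.comul x))
          = D.counit x • LinearMap.id := by
  obtain ⟨β, hβ⟩ := hl.conv_inv
  rcases h with hcocomm | hconn
  · exact ⟨β, fun x => by simpa only [hcocomm x] using hβ x⟩
  have hB := hl.isHopf.isBialgebra
  let := D.toCoalgebra hB
  let opE := MulOpposite.opLinearEquiv K (M := Module.End K H)
  have hone : ∀ β' l' : H →ₗ[K] H →ₗ[K] H,
      (∀ x, lift ((LinearMap.llcomp K H H H).compl₁₂ l' β') (D.comul x)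
        = D.counit x • LinearMap.id) → opE (β' D.one) * opE (l' D.one) = 1 := by
    intro β' l' h'
    have := h' D.one
    simp only [hB.comul_one, lift.tmul, hB.counit_one, one_smul] at this
    exact MulOpposite.unop_injective this
  obtain ⟨v, hv⟩ : IsUnit (toConv (opE.toLinearMap ∘ₗ l)) :=
    hB.isUnit_toConv_of_isConnected hconn
      ⟨⟨opE (l D.one), opE (β D.one), hone _ _ fun x => (hβ x).2, hone _ _ fun x => (hβ x).1⟩, rfl⟩
  let β' := opE.symm.toLinearMap ∘ₗ (↑v⁻¹ : WithConv (H →ₗ[K] (Module.End K H)ᵐᵒᵖ)).ofConv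
  have hβ' : toConv (opE.toLinearMap ∘ₗ β') = ↑v⁻¹ :=
    WithConv.ext (LinearMap.ext fun _ => opE.apply_symm_apply _)
  refine ⟨β', fun x => ⟨?_, ?_⟩⟩
  · rw [← unop_convMul_apply, hβ', ← hv, Units.inv_mul]
    rfl
  · rw [← unop_convMul_apply, hβ', ← hv, Units.mul_inv]
    rfl

end BialgData

theorem statement5 {K : Type*} [Field K]
    {H : Type*} [AddCommGroup H] [Module K H]
    (D : BialgData K H) (l : H →ₗ[K] H →ₗ[K] H)
    (hl : D.IsLeftPostHopf l)
    (h : D.IsCocomm ∨ D.IsConnected) :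
    ((D.op).cop).IsRightPostHopf l.flip := by
  refine ⟨hl.isHopf.op_cop, fun x y => (hl.counit_l y x).trans (mul_comm _ _), fun x y => ?_,
    fun x y z => ?_, fun x y z => ?_, hl.exists_convInv_cop h⟩
  · change TensorProduct.comm K H H (D.comul (l y x)) = _
    rw [hl.comul_l, comm_map₂, map₂_flip]
    rfl
  · change l z (D.mul y x) = lift (D.mul.flip.compl₁₂ (l.flip x) (l.flip y))
      (TensorProduct.comm K H H (D.comul z))
    rw [lift_comm_apply]
    exact hl.l_mul z y x
  · change l z (l y x) = l (lift (D.mul.flip.compl₁₂ (l.flip y) LinearMap.id)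
      (TensorProduct.comm K H H (D.comul z))) x
    rw [hl.l_l, lift_comm_apply, lift_compr₂]
    rfl
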